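/- Let S, T be trees and let U ↪ S ⊗ T be a subtree (a tree with an injective broad poset map into S ⊗ T). Then U is full (i.e. the broad relations among elements of U in S ⊗ T all hold in U) if and only if for each leaf l of U it is not the case that ε ≤ φ(l) in S ⊗ T. -/

import Mathlib

universe u

namespace BroadPaper

/-- A broad relation on `X`: a relation between finite unordered tuples
(multisets) over `X` and elements of `X`. -/
abbrev Rel (X : Type u) : Type u := Multiset X → X → Prop

variable {X : Type u} {Y : Type u} {A : Type u} {B : Type u} {Z : Type u}

/-- Broad transitivity: if `f₁ ⋯ fₙ ≤ e` and `g̲ᵢ ≤ fᵢ` then `g̲₁ ⋯ g̲ₙ ≤ e`,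
encoded via a multiset of pairs `(g̲ᵢ, fᵢ)`. -/
def BTrans (r : Rel X) : Prop :=
  ∀ (p : Multiset (Multiset X × X)) (e : X),
    r (p.map Prod.snd) e → (∀ q ∈ p, r q.1 q.2) → r ((p.map Prod.fst).sum) e

/-- A pre-broad poset: reflexivity plus broad transitivity. -/
def IsPreBroad (r : Rel X) : Prop := (∀ e : X, r {e} e) ∧ BTrans r

/-- A (commutative) broad poset: a pre-broad poset satisfying antisymmetry. -/
def IsBroad (r : Rel X) : Prop :=
  IsPreBroad r ∧ ∀ e f : X, r {e} f → r {f} e → e = f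

/-- Simplicity: letters in any broad relation are pairwise distinct. -/
def Simple (r : Rel X) : Prop := ∀ fs e, r fs e → fs.Nodup

/-- The descendant relation `f ≤_d e`. -/
def descends (r : Rel X) (f e : X) : Prop := ∃ fs, r fs e ∧ f ∈ fs

def Comparable (r : Rel X) (f g : X) : Prop := descends r f g ∨ descends r g f

def Incomp (r : Rel X) (f g : X) : Prop := ¬ descends r f g ∧ ¬ descends r g f

/-- Blockwise extension of a broad relation to a relation between tuples:
`fs ≤ es` iff `fs = f̲₁ ⋯ f̲ₖ`, `es = e₁ ⋯ eₖ` with `f̲ᵢ ≤ eᵢ`. -/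
def tupleLE (r : Rel X) (fs es : Multiset X) : Prop :=
  ∃ p : Multiset (Multiset X × X),
    p.map Prod.snd = es ∧ (p.map Prod.fst).sum = fs ∧ ∀ q ∈ p, r q.1 q.2

/-- A leaf: no tuple strictly below `e`. -/
def IsLeaf (r : Rel X) (e : X) : Prop := ¬ ∃ fs, r fs e ∧ fs ≠ ({e} : Multiset X)

/-- `fs` is the maximum tuple strictly below `e` (written `e^↑`).
If `fs ≠ 0`, `e` is a node; if `fs = 0`, `e` is a stump. -/
def upTuple (r : Rel X) (e : X) (fs : Multiset X) : Prop :=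
  (r fs e ∧ fs ≠ ({e} : Multiset X)) ∧
    ∀ gs, r gs e → gs ≠ ({e} : Multiset X) → tupleLE r gs fs

def IsStump (r : Rel X) (e : X) : Prop := upTuple r e 0

/-- A dendroidally ordered set (tree): a finite simple broad poset in which
every element is a leaf, node or stump, with a `≤_d`-maximum (root). -/
def IsTree (r : Rel X) : Prop :=
  IsBroad r ∧ Finite X ∧ Simple r ∧
    (∀ e : X, IsLeaf r e ∨ ∃ fs, upTuple r e fs) ∧
    ∃ rt : X, ∀ e, descends r e rt

def IsMaxEl (r : Rel X) (e : X) : Prop := ∀ s, descends r e s → s = e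

/-- A forestially ordered set (forest): each element has a unique
`≤_d`-maximal element above it. -/
def IsForest (r : Rel X) : Prop :=
  IsBroad r ∧ Finite X ∧ Simple r ∧
    (∀ e : X, IsLeaf r e ∨ ∃ fs, upTuple r e fs) ∧
    ∀ e : X, ∃! rt : X, IsMaxEl r rt ∧ descends r e rt

/-- A map of broad posets: preserves broad relations (letterwise on tuples). -/
def BroadHom (r : Rel X) (r' : Rel Y) (φ : X → Y) : Prop :=
  ∀ fs e, r fs e → r' (fs.map φ) (φ e)

/-- `rs` is the root tuple: the tuple of `≤_d`-maximal elements (no repeats). -/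
def IsRootTuple (r : Rel X) (rs : Multiset X) : Prop :=
  rs.Nodup ∧ ∀ x, x ∈ rs ↔ IsMaxEl r x

/-- Independent map of forests: `φ(r̲_F)·e̲ ≤ r̲_{F'}` for some tuple `e̲`. -/
def Independent (r : Rel X) (r' : Rel Y) (φ : X → Y) : Prop :=
  ∃ (rs : Multiset X) (rs' : Multiset Y) (es : Multiset Y),
    IsRootTuple r rs ∧ IsRootTuple r' rs' ∧ tupleLE r' (rs.map φ + es) rs'

/-- The (pre-)broad relation generated by a set of generating relations:
closure under reflexivity and broad transitivity. -/
inductive GenRel (gen : Rel X) : Rel X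
  | of : ∀ fs e, gen fs e → GenRel gen fs e
  | refl : ∀ e, GenRel gen {e} e
  | btrans : ∀ (p : Multiset (Multiset X × X)) (e : X),
      GenRel gen (p.map Prod.snd) e → (∀ q ∈ p, GenRel gen q.1 q.2) →
      GenRel gen ((p.map Prod.fst).sum) e

/-- Generators of the tensor product `S ⊗ T`: relations `s̲ × t ≤ (s,t)` and
`s × t̲ ≤ (s,t)`. -/
def tensorGen (rS : Rel A) (rT : Rel B) : Rel (A × B) := fun xs x =>
  (∃ as, rS as x.1 ∧ xs = as.map fun a => (a, x.2)) ∨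
  (∃ bs, rT bs x.2 ∧ xs = bs.map fun b => (x.1, b))

/-- The tensor product broad relation on `A × B`. -/
def tensorRel (rS : Rel A) (rT : Rel B) : Rel (A × B) := GenRel (tensorGen rS rT)

/-- Product of tuples: all pairs from `as` and `bs`. -/
def mprod (as : Multiset A) (bs : Multiset B) : Multiset (A × B) :=
  as.bind fun a => bs.map fun b => (a, b)

end BroadPaper

/-!
For trees, `x̲ ≤ x` holds in `S ⊗ T` exactly when `{x}` rewrites to `x̲` by repeatedly replacing
an entry `(s, t)` by `s^↑ × t` or by `s × t^↑`. Along such reductions any two entries stay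
incomparable in one coordinate, so a reduction of a tuple splits into independent reductions of
its entries; and a reduction of `(s, t)` whose result has no entry with second coordinate `t`
factors through `s × t^↑`. Hence, if two reductions of `x` end in
`x̲` and `y̲` with every entry of `x̲` below an entry of `y̲`, then `x̲ ≤ y̲` blockwise.

Now let `φ u̲ ≤ φ u` in `S ⊗ T` with `u̲ ≠ u`. Since `φ` reflects the descendant order, every
`v ∈ u̲` lies strictly below `u`, and `u` is not a leaf (for `u̲ = ε` this is the hypothesis).
Factoring `φ u̲` over `φ (u^↑)` and inducting on `u` gives `u̲ ≤ u^↑ ≤ u` in `U`.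
-/

namespace BroadPaper

open Multiset

variable {X Y Z A B : Type u}

theorem _root_.Multiset.exists_eq_add_of_map_eq_add {α β : Type*} (φ : α → β) :
    ∀ (m₁ : Multiset β) {m₂ : Multiset β} {c : Multiset α}, c.map φ = m₁ + m₂ →
      ∃ c₁ c₂, c = c₁ + c₂ ∧ c₁.map φ = m₁ ∧ c₂.map φ = m₂ := by
  classical
  intro m₁
  induction m₁ using Multiset.induction_on with
  | empty => intro m₂ c h; exact ⟨0, c, by simp, by simp, by simpa using h⟩
  | cons a m₁ ih =>
    intro m₂ c h
    rw [cons_add] at h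
    obtain ⟨w, hw, hfw, hrest⟩ := (map_eq_cons φ c (m₁ + m₂) a).2 h
    obtain ⟨c₁, c₂, hc, h1, h2⟩ := ih hrest
    refine ⟨w ::ₘ c₁, c₂, ?_, by simp [hfw, h1], h2⟩
    rw [cons_add, ← hc, cons_erase hw]

theorem _root_.Multiset.exists_eq_cons_cons_of_mem {α : Type*} {s : Multiset α} {a b : α}
    (ha : a ∈ s) (hb : b ∈ s) (hab : a ≠ b) : ∃ t, s = a ::ₘ b ::ₘ t := by
  classical
  have hb' : b ∈ s.erase a := (mem_erase_of_ne hab.symm).2 hb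
  exact ⟨(s.erase a).erase b, by rw [cons_erase hb', cons_erase ha]⟩

theorem _root_.Multiset.bind_singleton_self {α : Type*} (s : Multiset α) :
    s.bind (fun a => {a}) = s :=
  (bind_singleton s id).trans (map_id s)

lemma wellFounded_strict_of_finite [Finite X] {le : X → X → Prop}
    (htrans : ∀ {a b c}, le a b → le b c → le a c) (hanti : ∀ {a b}, le a b → le b a → a = b) :
    WellFounded fun a b => le a b ∧ a ≠ b := by
  have : IsTrans X fun a b => le a b ∧ a ≠ b :=
    ⟨fun _ _ _ hab hbc => ⟨htrans hab.1 hbc.1, fun hac => hab.2 (hanti hab.1 (hac ▸ hbc.1))⟩⟩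
  have : Std.Irrefl fun a b : X => le a b ∧ a ≠ b := ⟨fun _ h => h.2 rfl⟩
  exact Finite.wellFounded_of_trans_of_irrefl _

section TupleLE

variable {r : Rel X} {fs es fs' es' : Multiset X}

lemma tupleLE_zero : tupleLE r 0 0 := ⟨0, rfl, rfl, by simp⟩

lemma tupleLE_singleton {e : X} (h : r fs e) : tupleLE r fs {e} :=
  ⟨{(fs, e)}, rfl, by simp, by simpa using h⟩

lemma tupleLE.add (h : tupleLE r fs es) (h' : tupleLE r fs' es') :
    tupleLE r (fs + fs') (es + es') := by
  obtain ⟨p, rfl, rfl, hp⟩ := h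
  obtain ⟨p', rfl, rfl, hp'⟩ := h'
  exact ⟨p + p', by simp, by simp, fun q hq => (mem_add.1 hq).elim (hp q) (hp' q)⟩

lemma tupleLE_bind {zs : Multiset Y} {f g : Y → Multiset X}
    (h : ∀ z ∈ zs, tupleLE r (f z) (g z)) : tupleLE r (zs.bind f) (zs.bind g) := by
  induction zs using Multiset.induction_on with
  | empty => simpa using tupleLE_zero
  | cons z zs ih =>
    simp only [cons_bind]
    exact (h z (mem_cons_self z zs)).add (ih fun z' hz' => h z' (mem_cons_of_mem hz'))

lemma tupleLE_of_forall {f : X → Multiset X} (h : ∀ e ∈ es, r (f e) e) :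
    tupleLE r (es.bind f) es := by
  have := tupleLE_bind (g := fun e => {e}) fun e he => tupleLE_singleton (h e he)
  rwa [bind_singleton_self] at this

lemma tupleLE_refl (hr : ∀ e, r {e} e) (es : Multiset X) : tupleLE r es es := by
  have := tupleLE_of_forall (r := r) (es := es) (f := fun e => {e}) fun e _ => hr e
  rwa [bind_singleton_self] at this

lemma tupleLE.mono {r' : Rel X} (h : tupleLE r fs es)
    (H : ∀ fs e, e ∈ es → r fs e → r' fs e) : tupleLE r' fs es := by
  obtain ⟨p, rfl, rfl, hp⟩ := h
  exact ⟨p, rfl, rfl, fun q hq => H _ _ (mem_map_of_mem _ hq) (hp q hq)⟩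

lemma tupleLE.map {r' : Rel Y} (g : X → Y) (h : tupleLE r fs es)
    (H : ∀ fs e, e ∈ es → r fs e → r' (fs.map g) (g e)) :
    tupleLE r' (fs.map g) (es.map g) := by
  obtain ⟨p, rfl, rfl, hp⟩ := h
  refine ⟨p.map fun q => (q.1.map g, g q.2), by simp, ?_, ?_⟩
  · change join _ = map g (join _)
    rw [map_join, map_map, map_map]
    rfl
  · simp only [mem_map, forall_exists_index, and_imp]
    rintro _ q hq rfl
    exact H _ _ (mem_map_of_mem _ hq) (hp q hq)

lemma tupleLE.exists_descends (h : tupleLE r fs es) {f : X} (hf : f ∈ fs) :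
    ∃ e ∈ es, descends r f e := by
  obtain ⟨p, rfl, rfl, hp⟩ := h
  obtain ⟨s, hs, hfs⟩ := mem_join.1 hf
  obtain ⟨q, hq, rfl⟩ := mem_map.1 hs
  exact ⟨q.2, mem_map_of_mem _ hq, q.1, hp q hq, hfs⟩

lemma BTrans.rel_of_tupleLE (hb : BTrans r) {e : X} (he : r es e) (h : tupleLE r fs es) :
    r fs e := by
  obtain ⟨p, rfl, rfl, hp⟩ := h
  exact hb p e he hp

lemma tupleLE_comap {r : Rel Y} (φ : Z → Y) :
    ∀ (gs : Multiset Z) {us : Multiset Z}, tupleLE r (us.map φ) (gs.map φ) →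
      tupleLE (fun fs e => r (fs.map φ) (φ e)) us gs := by
  classical
  intro gs
  induction gs using Multiset.induction_on with
  | empty =>
    rintro us ⟨p, hsnd, hsum, -⟩
    obtain rfl : p = 0 := by simpa using hsnd
    obtain rfl : us = 0 := by simpa using hsum.symm
    exact tupleLE_zero
  | cons v gs ih =>
    rintro us ⟨p, hsnd, hsum, hp⟩
    rw [map_cons] at hsnd
    obtain ⟨q, hq, hq2, hrest⟩ := (map_eq_cons Prod.snd p _ (φ v)).2 hsnd
    rw [← cons_erase hq, map_cons, sum_cons] at hsum
    obtain ⟨c₁, c₂, rfl, h1, h2⟩ := exists_eq_add_of_map_eq_add φ q.1 hsum.symm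
    have hblock : r (c₁.map φ) (φ v) := h1 ▸ hq2 ▸ hp q hq
    have hrest := ih ⟨p.erase q, hrest, h2.symm, fun q' hq' => hp q' (mem_of_mem_erase hq')⟩
    simpa [singleton_add] using
      (tupleLE_singleton (r := fun fs e => r (fs.map φ) (φ e)) hblock).add hrest

end TupleLE

section Broad

variable {r : Rel X} {fs gs rest : Multiset X} {e f g x : X}

lemma IsPreBroad.rel_add_erase [DecidableEq X] (h : IsPreBroad r) (hfs : r fs e) (hg : g ∈ fs)
    (hgs : r gs g) : r (gs + fs.erase g) e := by
  have hle : tupleLE r (gs + fs.erase g) (g ::ₘ fs.erase g) :=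
    (tupleLE_singleton hgs).add (tupleLE_refl h.1 _)
  rw [cons_erase hg] at hle
  exact h.2.rel_of_tupleLE hfs hle

lemma IsPreBroad.eq_singleton_of_mem (h : IsPreBroad r) (hs : Simple r) (hfs : r fs e)
    (he : e ∈ fs) : fs = {e} := by
  classical
  have hdisj := (nodup_add.1 (hs _ _ (h.rel_add_erase hfs he hfs))).2.2
  have h0 : fs.erase e = 0 :=
    eq_zero_of_forall_notMem fun a ha => disjoint_left.1 hdisj (mem_of_mem_erase ha) ha
  rw [← cons_erase he, h0]
  rfl

lemma IsPreBroad.descends_refl (h : IsPreBroad r) (e : X) : descends r e e :=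
  ⟨{e}, h.1 e, mem_singleton_self e⟩

lemma IsPreBroad.descends_trans (h : IsPreBroad r) (hfg : descends r f g)
    (hge : descends r g e) : descends r f e := by
  classical
  obtain ⟨fs, hfs, hf⟩ := hfg
  obtain ⟨gs, hgs, hg⟩ := hge
  exact ⟨fs + gs.erase g, h.rel_add_erase hgs hg hfs, mem_add.2 (Or.inl hf)⟩

lemma IsPreBroad.not_descends_sibling (h : IsPreBroad r) (hs : Simple r)
    (hrel : r (f ::ₘ g ::ₘ rest) x) (hef : descends r e f) : ¬ descends r e g := by
  classical
  rintro ⟨bs, hbs, heb⟩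
  obtain ⟨as, has, hea⟩ := hef
  have h1 : r (g ::ₘ (as + rest)) x := by
    simpa [add_cons] using h.rel_add_erase hrel (mem_cons_self f _) has
  have h2 : r (bs + (as + rest)) x := by
    simpa using h.rel_add_erase h1 (mem_cons_self g _) hbs
  exact disjoint_left.1 (nodup_add.1 (hs _ _ h2)).2.2 heb (mem_add.2 (Or.inl hea))

lemma IsPreBroad.incomp_of_mem (h : IsPreBroad r) (hs : Simple r) (hrel : r fs x)
    (hf : f ∈ fs) (hg : g ∈ fs) (hfg : f ≠ g) : Incomp r f g := by
  obtain ⟨rest, rfl⟩ := exists_eq_cons_cons_of_mem hf hg hfg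
  refine ⟨h.not_descends_sibling hs hrel (h.descends_refl f), fun hgf => ?_⟩
  exact h.not_descends_sibling hs hrel hgf (h.descends_refl g)

lemma IsBroad.descends_antisymm (h : IsBroad r) (hs : Simple r) (hef : descends r e f)
    (hfe : descends r f e) : e = f := by
  classical
  obtain ⟨fs, hfs, hf⟩ := hfe
  obtain ⟨es, hes, he⟩ := hef
  have hsum : es + fs.erase f = {e} :=
    h.1.eq_singleton_of_mem hs (h.1.rel_add_erase hfs hf hes) (mem_add.2 (Or.inl he))
  have hcard := congrArg card hsum
  have hes0 : 0 < card es := card_pos_iff_exists_mem.2 ⟨e, he⟩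
  simp only [card_add, card_singleton] at hcard
  have hfs0 : fs.erase f = 0 := card_eq_zero.1 (by omega)
  rw [hfs0, add_zero] at hsum
  rw [← cons_erase hf, hfs0] at hfs
  exact h.2 e f (hsum ▸ hes) hfs

lemma upTuple.descends_of_mem (hup : upTuple r e gs) (hg : g ∈ gs) : descends r g e :=
  ⟨gs, hup.1.1, hg⟩

lemma upTuple.not_mem (hup : upTuple r e gs) (h : IsPreBroad r) (hs : Simple r) : e ∉ gs :=
  fun he => hup.1.2 (h.eq_singleton_of_mem hs hup.1.1 he)

lemma upTuple.descends_ne_of_mem (hup : upTuple r e gs) (h : IsPreBroad r) (hs : Simple r)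
    (hg : g ∈ gs) : descends r g e ∧ g ≠ e :=
  ⟨hup.descends_of_mem hg, fun hge => hup.not_mem h hs (hge ▸ hg)⟩

lemma upTuple.exists_mem_descends (hup : upTuple r e gs) (hfe : descends r f e) (hne : f ≠ e) :
    ∃ g ∈ gs, descends r f g := by
  obtain ⟨fs, hfs, hf⟩ := hfe
  refine (hup.2 fs hfs ?_).exists_descends hf
  rintro rfl
  exact hne (mem_singleton.1 hf)

namespace IsTree

lemma isPreBroad (ht : IsTree r) : IsPreBroad r := ht.1.1

lemma simple (ht : IsTree r) : Simple r := ht.2.2.1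

lemma leaf_or_upTuple (ht : IsTree r) (e : X) : IsLeaf r e ∨ ∃ fs, upTuple r e fs :=
  ht.2.2.2.1 e

lemma descends_antisymm (ht : IsTree r) (hef : descends r e f) (hfe : descends r f e) :
    e = f :=
  ht.1.descends_antisymm ht.simple hef hfe

lemma wellFounded (ht : IsTree r) : WellFounded fun a b => descends r a b ∧ a ≠ b :=
  have : Finite X := ht.2.1
  wellFounded_strict_of_finite ht.isPreBroad.descends_trans ht.descends_antisymm

lemma exists_upTuple (ht : IsTree r) (hfe : descends r f e) (hne : f ≠ e) :
    ∃ gs, upTuple r e gs := by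
  refine (ht.leaf_or_upTuple e).resolve_left fun hleaf => ?_
  obtain ⟨fs, hfs, hf⟩ := hfe
  exact hleaf ⟨fs, hfs, by rintro rfl; exact hne (mem_singleton.1 hf)⟩

lemma exists_siblings (ht : IsTree r) {u v : X} (huv : ¬ descends r u v)
    (hvu : ¬ descends r v u) :
    ∃ rest x f g, r (f ::ₘ g ::ₘ rest) x ∧ descends r u f ∧ descends r v g := by
  obtain ⟨rt, hrt⟩ := ht.2.2.2.2
  suffices ∀ x, descends r u x → descends r v x →
      ∃ rest x f g, r (f ::ₘ g ::ₘ rest) x ∧ descends r u f ∧ descends r v g from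
    this rt (hrt u) (hrt v)
  intro x
  induction x using ht.wellFounded.induction with
  | _ x ih =>
  intro hux hvx
  have hune : u ≠ x := by rintro rfl; exact hvu hvx
  have hvne : v ≠ x := by rintro rfl; exact huv hux
  obtain ⟨gs, hup⟩ := ht.exists_upTuple hux hune
  obtain ⟨f, hf, huf⟩ := hup.exists_mem_descends hux hune
  obtain ⟨g, hg, hvg⟩ := hup.exists_mem_descends hvx hvne
  by_cases hfg : f = g
  · subst hfg
    exact ih f (hup.descends_ne_of_mem ht.isPreBroad ht.simple hf) huf hvg
  · obtain ⟨rest, rfl⟩ := exists_eq_cons_cons_of_mem hf hg hfg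
    exact ⟨rest, x, f, g, hup.1.1, huf, hvg⟩

lemma comparable_of_descends (ht : IsTree r) (hf : descends r e f) (hg : descends r e g) :
    descends r f g ∨ descends r g f := by
  by_contra! h
  obtain ⟨rest, x, f', g', hrel, hff', hgg'⟩ := ht.exists_siblings h.1 h.2
  exact ht.isPreBroad.not_descends_sibling ht.simple hrel
    (ht.isPreBroad.descends_trans hf hff') (ht.isPreBroad.descends_trans hg hgg')

lemma incomp_of_descends (ht : IsTree r) (h : Incomp r e f) {e' : X} (he : descends r e' e) :
    Incomp r e' f := by
  refine ⟨fun he'f => ?_, fun hfe' => h.2 (ht.isPreBroad.descends_trans hfe' he)⟩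
  rcases ht.comparable_of_descends he he'f with hef | hfe
  exacts [h.1 hef, h.2 hfe]

lemma upTuple_unique (ht : IsTree r) (hf : upTuple r e fs) (hg : upTuple r e gs) : fs = gs := by
  have key : ∀ {fs gs}, upTuple r e fs → upTuple r e gs → ∀ f ∈ fs, f ∈ gs := by
    intro fs gs hf hg f hfmem
    obtain ⟨g, hgmem, hfg⟩ := (hg.2 fs hf.1.1 hf.1.2).exists_descends hfmem
    obtain ⟨f', hfmem', hgf'⟩ := (hf.2 gs hg.1.1 hg.1.2).exists_descends hgmem
    obtain rfl : f = f' := by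
      by_contra hne
      exact (ht.isPreBroad.incomp_of_mem ht.simple hf.1.1 hfmem hfmem' hne).1
        (ht.isPreBroad.descends_trans hfg hgf')
    exact ht.descends_antisymm hfg hgf' ▸ hgmem
  exact (Nodup.ext (ht.simple _ _ hf.1.1) (ht.simple _ _ hg.1.1)).2
    fun a => ⟨key hf hg a, key hg hf a⟩

end IsTree

end Broad

lemma GenRel.isPreBroad (gen : Rel X) : IsPreBroad (GenRel gen) :=
  ⟨GenRel.refl, GenRel.btrans⟩

section Tensor

variable {rS : Rel A} {rT : Rel B} {w x y z : A × B} {xs ys zs : Multiset (A × B)}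

def prodDescends (rS : Rel A) (rT : Rel B) (w x : A × B) : Prop :=
  descends rS w.1 x.1 ∧ descends rT w.2 x.2

def Apart (rS : Rel A) (rT : Rel B) (y z : A × B) : Prop :=
  Incomp rS y.1 z.1 ∨ Incomp rT y.2 z.2

def Separated (rS : Rel A) (rT : Rel B) (xs : Multiset (A × B)) : Prop :=
  xs.Nodup ∧ ∀ y ∈ xs, ∀ z ∈ xs, y ≠ z → Apart rS rT y z

def Dominated (rS : Rel A) (rT : Rel B) (xs ys : Multiset (A × B)) : Prop :=
  ∀ w ∈ xs, ∃ y ∈ ys, prodDescends rS rT w y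

def Expansion (rS : Rel A) (rT : Rel B) (x : A × B) (zs : Multiset (A × B)) : Prop :=
  (∃ as, upTuple rS x.1 as ∧ zs = as.map (·, x.2)) ∨
    (∃ bs, upTuple rT x.2 bs ∧ zs = bs.map (x.1, ·))

def Step (rS : Rel A) (rT : Rel B) (xs ys : Multiset (A × B)) : Prop :=
  ∃ x zs c, Expansion rS rT x zs ∧ xs = x ::ₘ c ∧ ys = zs + c

/-- For trees, `tensorRel rS rT xs x ↔ Reach rS rT {x} xs`
(`reach_of_tensorRel`, `Reach.tensorRel`). -/
def Reach (rS : Rel A) (rT : Rel B) : Multiset (A × B) → Multiset (A × B) → Prop :=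
  Relation.ReflTransGen (Step rS rT)

lemma prodDescends_refl (hS : IsPreBroad rS) (hT : IsPreBroad rT) (x : A × B) :
    prodDescends rS rT x x :=
  ⟨hS.descends_refl _, hT.descends_refl _⟩

lemma prodDescends.trans (hS : IsPreBroad rS) (hT : IsPreBroad rT)
    (hwy : prodDescends rS rT w y) (hyx : prodDescends rS rT y x) : prodDescends rS rT w x :=
  ⟨hS.descends_trans hwy.1 hyx.1, hT.descends_trans hwy.2 hyx.2⟩

lemma prodDescends_antisymm (hS : IsTree rS) (hT : IsTree rT) (hxy : prodDescends rS rT x y)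
    (hyx : prodDescends rS rT y x) : x = y :=
  Prod.ext (hS.descends_antisymm hxy.1 hyx.1) (hT.descends_antisymm hxy.2 hyx.2)

lemma prodDescends_wellFounded (hS : IsTree rS) (hT : IsTree rT) :
    WellFounded fun w x => prodDescends rS rT w x ∧ w ≠ x :=
  have : Finite A := hS.2.1
  have : Finite B := hT.2.1
  wellFounded_strict_of_finite (prodDescends.trans hS.isPreBroad hT.isPreBroad)
    (prodDescends_antisymm hS hT)

lemma Dominated.trans (hS : IsPreBroad rS) (hT : IsPreBroad rT) (hxy : Dominated rS rT xs ys)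
    (hyz : Dominated rS rT ys zs) : Dominated rS rT xs zs := fun w hw =>
  have ⟨y, hy, hwy⟩ := hxy w hw
  have ⟨z, hz, hyz⟩ := hyz y hy
  ⟨z, hz, hwy.trans hS hT hyz⟩

lemma Apart.symm (h : Apart rS rT y z) : Apart rS rT z y :=
  h.imp And.symm And.symm

lemma Apart.not_prodDescends (h : Apart rS rT w z) : ¬ prodDescends rS rT w z :=
  fun hwz => h.elim (·.1 hwz.1) (·.1 hwz.2)

lemma not_apart_self (hS : IsPreBroad rS) (hT : IsPreBroad rT) (x : A × B) :
    ¬ Apart rS rT x x :=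
  fun h => h.not_prodDescends (prodDescends_refl hS hT x)

lemma Apart.of_prodDescends (hS : IsTree rS) (hT : IsTree rT) (h : Apart rS rT y z)
    (hwy : prodDescends rS rT w y) : Apart rS rT w z :=
  h.imp (hS.incomp_of_descends · hwy.1) (hT.incomp_of_descends · hwy.2)

lemma separated_singleton (x : A × B) : Separated rS rT {x} :=
  ⟨nodup_singleton x, by simp⟩

lemma Separated.replace (hS : IsTree rS) (hT : IsTree rT) {c : Multiset (A × B)}
    (hsep : Separated rS rT (x ::ₘ c)) (hzs : Separated rS rT zs)
    (hbelow : ∀ w ∈ zs, prodDescends rS rT w x) : Separated rS rT (zs + c) := by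
  obtain ⟨hnd, hap⟩ := hsep
  obtain ⟨hxc, hc⟩ := nodup_cons.1 hnd
  have hnew : ∀ w ∈ zs, ∀ z ∈ c, Apart rS rT w z := fun w hw z hz =>
    (hap x (mem_cons_self x c) z (mem_cons_of_mem hz) fun h => hxc (h ▸ hz)).of_prodDescends
      hS hT (hbelow w hw)
  refine ⟨nodup_add.2 ⟨hzs.1, hc, disjoint_left.2 fun hw hwc =>
    not_apart_self hS.isPreBroad hT.isPreBroad _ (hnew _ hw _ hwc)⟩, ?_⟩
  intro y hy z hz hyz
  rcases mem_add.1 hy with hy | hy <;> rcases mem_add.1 hz with hz | hz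
  · exact hzs.2 y hy z hz hyz
  · exact hnew y hy z hz
  · exact (hnew z hz y hy).symm
  · exact hap y (mem_cons_of_mem hy) z (mem_cons_of_mem hz) hyz

namespace Expansion

lemma prodDescends (hS : IsTree rS) (hT : IsTree rT) (h : Expansion rS rT x zs) (hw : w ∈ zs) :
    prodDescends rS rT w x ∧ w ≠ x := by
  rcases h with ⟨as, hup, rfl⟩ | ⟨bs, hup, rfl⟩
  · obtain ⟨a, ha, rfl⟩ := mem_map.1 hw
    have ⟨hax, hne⟩ := hup.descends_ne_of_mem hS.isPreBroad hS.simple ha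
    exact ⟨⟨hax, hT.isPreBroad.descends_refl _⟩, fun h => hne (congrArg Prod.fst h)⟩
  · obtain ⟨b, hb, rfl⟩ := mem_map.1 hw
    have ⟨hbx, hne⟩ := hup.descends_ne_of_mem hT.isPreBroad hT.simple hb
    exact ⟨⟨hS.isPreBroad.descends_refl _, hbx⟩, fun h => hne (congrArg Prod.snd h)⟩

lemma separated (hS : IsTree rS) (hT : IsTree rT) (h : Expansion rS rT x zs) :
    Separated rS rT zs := by
  rcases h with ⟨as, hup, rfl⟩ | ⟨bs, hup, rfl⟩
  · refine ⟨(hS.simple _ _ hup.1.1).map fun _ _ h => congrArg Prod.fst h, ?_⟩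
    simp only [mem_map]
    rintro _ ⟨a, ha, rfl⟩ _ ⟨a', ha', rfl⟩ hne
    exact Or.inl <|
      hS.isPreBroad.incomp_of_mem hS.simple hup.1.1 ha ha' fun h => hne (Prod.ext h rfl)
  · refine ⟨(hT.simple _ _ hup.1.1).map fun _ _ h => congrArg Prod.snd h, ?_⟩
    simp only [mem_map]
    rintro _ ⟨b, hb, rfl⟩ _ ⟨b', hb', rfl⟩ hne
    exact Or.inr <|
      hT.isPreBroad.incomp_of_mem hT.simple hup.1.1 hb hb' fun h => hne (Prod.ext rfl h)

lemma tensorRel (h : Expansion rS rT x zs) : tensorRel rS rT zs x :=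
  GenRel.of _ _ (h.imp (fun ⟨as, hup, h⟩ => ⟨as, hup.1.1, h⟩) fun ⟨bs, hup, h⟩ => ⟨bs, hup.1.1, h⟩)

lemma swap (h : Expansion rS rT x zs) : Expansion rT rS x.swap (zs.map Prod.swap) := by
  rcases h with ⟨as, hup, rfl⟩ | ⟨bs, hup, rfl⟩
  · exact Or.inr ⟨as, hup, by simp [map_map]⟩
  · exact Or.inl ⟨bs, hup, by simp [map_map]⟩

lemma step (h : Expansion rS rT x zs) : Step rS rT {x} zs :=
  ⟨x, zs, 0, h, rfl, (add_zero zs).symm⟩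

end Expansion

lemma Step.expansion_of_singleton (h : Step rS rT {x} ys) : Expansion rS rT x ys := by
  obtain ⟨x', zs, c, hexp, hx, rfl⟩ := h
  obtain ⟨rfl, rfl⟩ := (singleton_eq_cons_iff c).1 hx
  simpa using hexp

namespace Step

lemma add_right (h : Step rS rT xs ys) (c : Multiset (A × B)) :
    Step rS rT (xs + c) (ys + c) := by
  obtain ⟨x, zs, c', hexp, rfl, rfl⟩ := h
  exact ⟨x, zs, c' + c, hexp, cons_add x c' c, add_assoc zs c' c⟩

lemma separated (hS : IsTree rS) (hT : IsTree rT) (h : Step rS rT xs ys)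
    (hxs : Separated rS rT xs) : Separated rS rT ys := by
  obtain ⟨x, zs, c, hexp, rfl, rfl⟩ := h
  exact hxs.replace hS hT (hexp.separated hS hT) fun w hw => (hexp.prodDescends hS hT hw).1

lemma dominated (hS : IsTree rS) (hT : IsTree rT) (h : Step rS rT xs ys) :
    Dominated rS rT ys xs := by
  obtain ⟨x, zs, c, hexp, rfl, rfl⟩ := h
  intro w hw
  rcases mem_add.1 hw with hw | hw
  · exact ⟨x, mem_cons_self x c, (hexp.prodDescends hS hT hw).1⟩
  · exact ⟨w, mem_cons_of_mem hw, prodDescends_refl hS.isPreBroad hT.isPreBroad w⟩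

lemma swap (h : Step rS rT xs ys) : Step rT rS (xs.map Prod.swap) (ys.map Prod.swap) := by
  obtain ⟨x, zs, c, hexp, rfl, rfl⟩ := h
  exact ⟨x.swap, zs.map Prod.swap, c.map Prod.swap, hexp.swap, map_cons _ _ _, map_add _ _ _⟩

lemma tensorRel (h : Step rS rT xs ys) (hxs : tensorRel rS rT xs x) : tensorRel rS rT ys x := by
  classical
  obtain ⟨x', zs, c, hexp, rfl, rfl⟩ := h
  have h := (GenRel.isPreBroad _).rel_add_erase hxs (mem_cons_self x' c) hexp.tensorRel
  rwa [erase_cons_head] at h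

end Step

namespace Reach

lemma add_right (h : Reach rS rT xs ys) (c : Multiset (A × B)) :
    Reach rS rT (xs + c) (ys + c) :=
  Relation.ReflTransGen.lift (· + c) (fun _ _ (h : Step rS rT _ _) => h.add_right c) _ _ h

lemma add_left (h : Reach rS rT xs ys) (c : Multiset (A × B)) :
    Reach rS rT (c + xs) (c + ys) := by
  rw [add_comm c, add_comm c]
  exact h.add_right c

lemma of_tupleLE (h : tupleLE (fun ys x => Reach rS rT {x} ys) xs zs) : Reach rS rT zs xs := by
  obtain ⟨p, rfl, rfl, hp⟩ := h
  induction p using Multiset.induction_on with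
  | empty => exact .refl
  | cons q p ih =>
    simp only [map_cons, sum_cons]
    have h1 := (hp q (mem_cons_self q p)).add_right (p.map Prod.snd)
    rw [singleton_add] at h1
    exact h1.trans ((ih fun q' hq' => hp q' (mem_cons_of_mem hq')).add_left q.1)

lemma bind {f : A × B → Multiset (A × B)} (h : ∀ z ∈ zs, Reach rS rT {z} (f z)) :
    Reach rS rT zs (zs.bind f) :=
  of_tupleLE (tupleLE_of_forall h)

lemma separated (hS : IsTree rS) (hT : IsTree rT) (h : Reach rS rT xs ys)
    (hxs : Separated rS rT xs) : Separated rS rT ys := by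
  induction h with
  | refl => exact hxs
  | tail _ hstep ih => exact hstep.separated hS hT ih

lemma dominated (hS : IsTree rS) (hT : IsTree rT) (h : Reach rS rT xs ys) :
    Dominated rS rT ys xs := by
  induction h with
  | refl => exact fun w hw => ⟨w, hw, prodDescends_refl hS.isPreBroad hT.isPreBroad w⟩
  | tail _ hstep ih => exact (hstep.dominated hS hT).trans hS.isPreBroad hT.isPreBroad ih

lemma swap (h : Reach rS rT xs ys) : Reach rT rS (xs.map Prod.swap) (ys.map Prod.swap) :=
  Relation.ReflTransGen.lift (map Prod.swap) (fun _ _ (h : Step rS rT _ _) => h.swap) _ _ h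

lemma tensorRel (h : Reach rS rT xs ys) (hxs : tensorRel rS rT xs x) : tensorRel rS rT ys x := by
  induction h with
  | refl => exact hxs
  | tail _ hstep ih => exact hstep.tensorRel ih

end Reach

lemma reach_of_rel_left (hS : IsTree rS) (t : B) {s : A} {as : Multiset A} (has : rS as s) :
    Reach rS rT {(s, t)} (as.map (·, t)) := by
  induction s using hS.wellFounded.induction generalizing as with
  | _ s ih =>
  by_cases has1 : as = {s}
  · subst has1
    exact .refl
  obtain ⟨ss, hup⟩ := (hS.leaf_or_upTuple s).resolve_left fun hleaf => hleaf ⟨as, has, has1⟩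
  refine .head (Expansion.step (Or.inl ⟨ss, hup, rfl⟩)) (Reach.of_tupleLE ?_)
  exact (hup.2 as has has1).map (·, t) fun _ a ha hfs =>
    ih a (hup.descends_ne_of_mem hS.isPreBroad hS.simple ha) hfs

lemma reach_of_rel_right (hT : IsTree rT) (s : A) {t : B} {bs : Multiset B} (hbs : rT bs t) :
    Reach rS rT {(s, t)} (bs.map (s, ·)) := by
  simpa [map_map, Function.comp_def] using (reach_of_rel_left (rT := rS) hT s hbs).swap

lemma reach_of_tensorRel (hS : IsTree rS) (hT : IsTree rT) (h : tensorRel rS rT xs x) :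
    Reach rS rT {x} xs := by
  induction h with
  | of fs e hgen =>
    rcases hgen with ⟨as, has, rfl⟩ | ⟨bs, hbs, rfl⟩
    · exact reach_of_rel_left hS e.2 has
    · exact reach_of_rel_right hT e.1 hbs
  | refl e => exact .refl
  | btrans p e _ _ ih ihq => exact ih.trans (Reach.of_tupleLE ⟨p, rfl, rfl, ihq⟩)

lemma tensorRel_simple (hS : IsTree rS) (hT : IsTree rT) : Simple (tensorRel rS rT) :=
  fun _ x h => ((reach_of_tensorRel hS hT h).separated hS hT (separated_singleton x)).1

lemma tensorRel.prodDescends (hS : IsTree rS) (hT : IsTree rT) (h : tensorRel rS rT xs x)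
    (hw : w ∈ xs) : prodDescends rS rT w x := by
  obtain ⟨x', hx', hwx⟩ := (reach_of_tensorRel hS hT h).dominated hS hT w hw
  rwa [mem_singleton.1 hx'] at hwx

lemma tensorRel.apart (hS : IsTree rS) (hT : IsTree rT) (h : tensorRel rS rT xs x)
    (hy : y ∈ xs) (hz : z ∈ xs) (hyz : y ≠ z) : Apart rS rT y z :=
  ((reach_of_tensorRel hS hT h).separated hS hT (separated_singleton x)).2 y hy z hz hyz

/-- Separation keeps the entries distinct along the reduction, so every step can be charged to a
unique entry of `zs`. -/
lemma Reach.split (hS : IsTree rS) (hT : IsTree rT) (h : Reach rS rT zs xs)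
    (hzs : Separated rS rT zs) :
    ∃ f : A × B → Multiset (A × B), zs.bind f = xs ∧ ∀ z ∈ zs, Reach rS rT {z} (f z) := by
  classical
  induction h using Relation.ReflTransGen.head_induction_on with
  | refl => exact ⟨fun z => {z}, bind_singleton_self _, fun _ _ => .refl⟩
  | head hstep _ ih =>
    obtain ⟨f, hsum, hf⟩ := ih (hstep.separated hS hT hzs)
    obtain ⟨x, ws, c, hexp, rfl, rfl⟩ := hstep
    have hxc : x ∉ c := (nodup_cons.1 hzs.1).1
    have hfc : c.bind (Function.update f x (ws.bind f)) = c.bind f :=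
      bind_congr fun z hz => Function.update_of_ne (ne_of_mem_of_not_mem hz hxc) _ _
    refine ⟨Function.update f x (ws.bind f), ?_, fun z hz => ?_⟩
    · rw [cons_bind, Function.update_self, hfc, ← add_bind, hsum]
    · rcases eq_or_ne z x with rfl | hne
      · rw [Function.update_self]
        exact .head hexp.step (Reach.bind fun w hw => hf w (mem_add.2 (Or.inl hw)))
      · rw [Function.update_of_ne hne]
        exact hf z (mem_add.2 (Or.inr ((mem_cons.1 hz).resolve_left hne)))

/-- A reduction that starts by expanding `s` splits into reductions of the `(a, t)`, `a ∈ s^↑`,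
each of which factors through `a × t^↑` by induction on `s`. -/
lemma Reach.split_of_upTuple_right (hS : IsTree rS) (hT : IsTree rT) {t : B} {ts : Multiset B}
    (hup : upTuple rT t ts) (s : A) {xs : Multiset (A × B)} (h : Reach rS rT {(s, t)} xs)
    (hxs : ∀ w ∈ xs, w.2 ≠ t) :
    ∃ f : B → Multiset (A × B), ts.bind f = xs ∧ ∀ b ∈ ts, Reach rS rT {(s, b)} (f b) := by
  induction s using hS.wellFounded.induction generalizing xs with
  | _ s ih =>
  rcases h.cases_head with rfl | ⟨ws, hstep, hrest⟩
  · exact absurd rfl (hxs (s, t) (mem_singleton_self _))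
  have hexp := hstep.expansion_of_singleton
  obtain ⟨fx, rfl, hfx⟩ := Reach.split hS hT hrest (hexp.separated hS hT)
  rcases hexp with ⟨as, hupS, rfl⟩ | ⟨bs, hupT, rfl⟩
  · have hblock : ∀ a, ∃ F : B → Multiset (A × B), a ∈ as →
        ts.bind F = fx (a, t) ∧ ∀ b ∈ ts, Reach rS rT {(a, b)} (F b) := by
      intro a
      by_cases ha : a ∈ as
      · have hmem : (a, t) ∈ as.map (·, t) := mem_map_of_mem _ ha
        obtain ⟨F, hF⟩ := ih a (hupS.descends_ne_of_mem hS.isPreBroad hS.simple ha)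
          (hfx _ hmem) fun w hw => hxs w (mem_bind.2 ⟨_, hmem, hw⟩)
        exact ⟨F, fun _ => hF⟩
      · exact ⟨fun _ => 0, fun h => absurd h ha⟩
    choose F hF using hblock
    refine ⟨fun b => as.bind (F · b), ?_, fun b hb => ?_⟩
    · rw [bind_bind, bind_map]
      exact bind_congr fun a ha => (hF a ha).1
    · have hreach := Reach.bind (rS := rS) (rT := rT) (zs := as.map (·, b)) (f := fun w => F w.1 b)
        (by simpa using fun a ha => (hF a ha).2 b hb)
      rw [bind_map] at hreach
      exact .head (Expansion.step (Or.inl ⟨as, hupS, rfl⟩)) hreach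
  · obtain rfl := hT.upTuple_unique hupT hup
    exact ⟨fun b => fx (s, b), (bind_map _ _ _).symm, fun b hb => hfx _ (mem_map_of_mem _ hb)⟩

lemma Reach.split_of_upTuple_left (hS : IsTree rS) (hT : IsTree rT) {s : A} {ss : Multiset A}
    (hup : upTuple rS s ss) (t : B) {xs : Multiset (A × B)} (h : Reach rS rT {(s, t)} xs)
    (hxs : ∀ w ∈ xs, w.1 ≠ s) :
    ∃ f : A → Multiset (A × B), ss.bind f = xs ∧ ∀ a ∈ ss, Reach rS rT {(a, t)} (f a) := by
  obtain ⟨f, hsum, hf⟩ := h.swap.split_of_upTuple_right hT hS hup t fun w hw => by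
    obtain ⟨v, hv, rfl⟩ := mem_map.1 hw
    exact hxs v hv
  refine ⟨fun a => (f a).map Prod.swap, ?_, fun a ha => by simpa using (hf a ha).swap⟩
  rw [← Multiset.map_bind, hsum, map_map, Prod.swap_swap_eq, map_id]

lemma Reach.split_of_expansion (hS : IsTree rS) (hT : IsTree rT) (hexp : Expansion rS rT x zs)
    (h : Reach rS rT {x} xs) (hdom : Dominated rS rT xs zs) :
    ∃ f : A × B → Multiset (A × B), zs.bind f = xs ∧ ∀ z ∈ zs, Reach rS rT {z} (f z) := by
  obtain ⟨s, t⟩ := x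
  rcases hexp with ⟨as, hup, rfl⟩ | ⟨bs, hup, rfl⟩
  · obtain ⟨f, hsum, hf⟩ := h.split_of_upTuple_left hS hT hup t fun w hw hws => by
      obtain ⟨_, hy, hwy⟩ := hdom w hw
      obtain ⟨a, ha, rfl⟩ := mem_map.1 hy
      have ⟨has, hne⟩ := hup.descends_ne_of_mem hS.isPreBroad hS.simple ha
      exact hne (hS.descends_antisymm has (hws ▸ hwy.1))
    exact ⟨fun z => f z.1, by simpa [bind_map] using hsum, by simpa using hf⟩
  · obtain ⟨f, hsum, hf⟩ := h.split_of_upTuple_right hS hT hup s fun w hw hwt => by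
      obtain ⟨_, hy, hwy⟩ := hdom w hw
      obtain ⟨b, hb, rfl⟩ := mem_map.1 hy
      have ⟨hbt, hne⟩ := hup.descends_ne_of_mem hT.isPreBroad hT.simple hb
      exact hne (hT.descends_antisymm hbt (hwt ▸ hwy.2))
    exact ⟨fun z => f z.2, by simpa [bind_map] using hsum, by simpa using hf⟩

/-- Nothing lies below two entries of a separated tuple, so `w ≤ y` puts `w` and `y` into the
same block. -/
lemma Dominated.of_bind (hS : IsTree rS) (hT : IsTree rT) (hzs : Separated rS rT zs)
    {fx fy : A × B → Multiset (A × B)} (hfx : ∀ z ∈ zs, Reach rS rT {z} (fx z))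
    (hfy : ∀ z ∈ zs, Reach rS rT {z} (fy z)) (hdom : Dominated rS rT (zs.bind fx) (zs.bind fy))
    (hz : z ∈ zs) : Dominated rS rT (fx z) (fy z) := by
  intro w hw
  obtain ⟨y, hy, hwy⟩ := hdom w (mem_bind.2 ⟨z, hz, hw⟩)
  obtain ⟨z', hz', hyz'⟩ := mem_bind.1 hy
  obtain rfl : z = z' := by
    by_contra hne
    obtain ⟨_, hx, hwz⟩ := (hfx z hz).dominated hS hT w hw
    obtain ⟨_, hx', hyz⟩ := (hfy z' hz').dominated hS hT y hyz'
    rw [mem_singleton.1 hx] at hwz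
    rw [mem_singleton.1 hx'] at hyz
    exact ((hzs.2 z hz z' hz' hne).of_prodDescends hS hT hwz).not_prodDescends
      (hwy.trans hS.isPreBroad hT.isPreBroad hyz)
  exact ⟨y, hyz', hwy⟩

/-- Split both reductions over the first expansion of the `ys`-reduction and recurse blockwise. -/
theorem tupleLE_tensorRel_of_reach (hS : IsTree rS) (hT : IsTree rT) (x : A × B)
    (hxs : Reach rS rT {x} xs) (hys : Reach rS rT {x} ys) (hdom : Dominated rS rT xs ys) :
    tupleLE (tensorRel rS rT) xs ys := by
  induction x using (prodDescends_wellFounded hS hT).induction generalizing xs ys with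
  | _ x ih =>
  rcases hys.cases_head with rfl | ⟨zs, hstep, hzys⟩
  · exact tupleLE_singleton (hxs.tensorRel (GenRel.refl x))
  have hexp := hstep.expansion_of_singleton
  have hzs := hexp.separated hS hT
  obtain ⟨fy, rfl, hfy⟩ := Reach.split hS hT hzys hzs
  obtain ⟨fx, rfl, hfx⟩ := hxs.split_of_expansion hS hT hexp
    (hdom.trans hS.isPreBroad hT.isPreBroad (Reach.dominated hS hT hzys))
  exact tupleLE_bind fun z hz => ih z (hexp.prodDescends hS hT hz) (hfx z hz) (hfy z hz)
    (Dominated.of_bind hS hT hzs hfx hfy hdom hz)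

end Tensor

section Subtree

variable {rS : Rel A} {rT : Rel B} {rU : Rel Z} {φ : Z → A × B}

lemma BroadHom.prodDescends_of_descends (hS : IsTree rS) (hT : IsTree rT)
    (hhom : BroadHom rU (tensorRel rS rT) φ) {v u : Z} (h : descends rU v u) :
    prodDescends rS rT (φ v) (φ u) := by
  obtain ⟨fs, hfs, hv⟩ := h
  exact (hhom fs u hfs).prodDescends hS hT (mem_map_of_mem φ hv)

/-- Incomparable elements of `U` lie below distinct siblings, whose images are apart. -/
lemma BroadHom.descends_of_prodDescends (hS : IsTree rS) (hT : IsTree rT) (hU : IsTree rU)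
    (hinj : Function.Injective φ) (hhom : BroadHom rU (tensorRel rS rT) φ) {v u : Z}
    (h : prodDescends rS rT (φ v) (φ u)) : descends rU v u := by
  have hmono : ∀ {v u}, descends rU v u → prodDescends rS rT (φ v) (φ u) :=
    BroadHom.prodDescends_of_descends hS hT hhom
  by_contra hvu
  by_cases huv : descends rU u v
  · obtain rfl := hinj (prodDescends_antisymm hS hT h (hmono huv))
    exact hvu (hU.isPreBroad.descends_refl v)
  obtain ⟨rest, w, f, g, hrel, huf, hvg⟩ := hU.exists_siblings huv hvu
  have hfg : f ≠ g := fun hfg => (nodup_cons.1 (hU.simple _ _ hrel)).1 (hfg ▸ mem_cons_self g rest)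
  have hapart := (hhom _ w hrel).apart hS hT (by simp) (by simp) (hinj.ne hfg)
  have hvf : prodDescends rS rT (φ v) (φ f) := h.trans hS.isPreBroad hT.isPreBroad (hmono huf)
  exact (hapart.of_prodDescends hS hT hvf).not_prodDescends (hmono hvg)

theorem full_of_forall_isLeaf (hS : IsTree rS) (hT : IsTree rT) (hU : IsTree rU)
    (hinj : Function.Injective φ) (hhom : BroadHom rU (tensorRel rS rT) φ)
    (hleaf : ∀ l, IsLeaf rU l → ¬ tensorRel rS rT 0 (φ l)) (u : Z) (us : Multiset Z)
    (hrel : tensorRel rS rT (us.map φ) (φ u)) : rU us u := by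
  induction u using hU.wellFounded.induction generalizing us with
  | _ u ih =>
  by_cases htriv : us.map φ = {φ u}
  · obtain ⟨v, rfl, hv⟩ := map_eq_singleton.1 htriv
    rw [hinj hv]
    exact hU.isPreBroad.1 u
  have hne : ∀ v ∈ us, v ≠ u := by
    rintro v hv rfl
    exact htriv ((GenRel.isPreBroad _).eq_singleton_of_mem (tensorRel_simple hS hT) hrel
      (mem_map_of_mem φ hv))
  have hbelow : ∀ v ∈ us, descends rU v u := fun v hv =>
    BroadHom.descends_of_prodDescends hS hT hU hinj hhom
      (hrel.prodDescends hS hT (mem_map_of_mem φ hv))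
  obtain ⟨gs, hup⟩ : ∃ gs, upTuple rU u gs := by
    rcases empty_or_exists_mem us with rfl | ⟨v, hv⟩
    · exact (hU.leaf_or_upTuple u).resolve_left fun hl => hleaf u hl (by simpa using hrel)
    · exact hU.exists_upTuple (hbelow v hv) (hne v hv)
  have hdom : Dominated rS rT (us.map φ) (gs.map φ) := by
    intro _ hw
    obtain ⟨v, hv, rfl⟩ := mem_map.1 hw
    obtain ⟨g, hg, hvg⟩ := hup.exists_mem_descends (hbelow v hv) (hne v hv)
    exact ⟨φ g, mem_map_of_mem φ hg, BroadHom.prodDescends_of_descends hS hT hhom hvg⟩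
  have hfac := tupleLE_comap φ gs <| tupleLE_tensorRel_of_reach hS hT (φ u)
    (reach_of_tensorRel hS hT hrel) (reach_of_tensorRel hS hT (hhom gs u hup.1.1)) hdom
  refine hU.isPreBroad.2.rel_of_tupleLE hup.1.1 (hfac.mono fun fs g hg hfs => ?_)
  exact ih g (hup.descends_ne_of_mem hU.isPreBroad hU.simple hg) fs hfs

end Subtree

/-- A subtree `U ↪ S ⊗ T` is full (every broad relation of
`S ⊗ T` among its elements holds in `U`) iff no leaf `l` of `U` satisfies
`ε ≤ φ l` in `S ⊗ T`. -/
theorem stmt16 {A B Z : Type u} (rS : Rel A) (rT : Rel B) (rU : Rel Z)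
    (hS : IsTree rS) (hT : IsTree rT) (hU : IsTree rU)
    (φ : Z → A × B) (hinj : Function.Injective φ)
    (hhom : BroadHom rU (tensorRel rS rT) φ) :
    (∀ us u, tensorRel rS rT (us.map φ) (φ u) → rU us u) ↔
      ∀ l, IsLeaf rU l → ¬ tensorRel rS rT 0 (φ l) := by
  refine ⟨fun hfull l hl hrel => hl ⟨0, hfull 0 l (by simpa using hrel), by simp⟩,
    fun hleaf us u => full_of_forall_isLeaf hS hT hU hinj hhom hleaf u us⟩

end BroadPaper
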